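/- Let F be a sector with a baseline and let (a,d) be a port candidate. Then for any two points p, q in F, |bdist(p,(a,d)) - bdist(q,(a,d))| ≤ 3. -/

import Mathlib

/-- A point in the plane. -/
abbrev Pt := ℝ × ℝ

/-- Two points span an axis-parallel (horizontal or vertical) segment. -/
def AxisParallel (a b : Pt) : Prop := a.1 = b.1 ∨ a.2 = b.2

/-- An orthogonal polyline inside the region `f`: a list of at least two points whose
consecutive segments are axis-parallel and contained in `f`. -/
def IsOrthoPolyline (f : Set Pt) (l : List Pt) : Prop :=
  2 ≤ l.length ∧ l.Chain' (fun a b => AxisParallel a b ∧ segment ℝ a b ⊆ f)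

/-- `PolyFrom f p q l`: `l` is an orthogonal polyline inside `f` from `p` to `q`. -/
def PolyFrom (f : Set Pt) (p q : Pt) (l : List Pt) : Prop :=
  IsOrthoPolyline f l ∧ l.head? = some p ∧ l.getLast? = some q

/-- The four axis directions. -/
inductive Dir | up | down | left | right
deriving DecidableEq

/-- The unit vector of a direction. -/
def Dir.vec : Dir → Pt
  | .up => (0, 1)
  | .down => (0, -1)
  | .left => (-1, 0)
  | .right => (1, 0)

/-- The polyline `l` arrives at its final point from direction `d`:
its last segment travels in direction `d`. -/
def ArrivesFrom (d : Dir) (l : List Pt) : Prop :=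
  ∃ x a : Pt, [x, a] <:+ l ∧ ∃ t : ℝ, 0 < t ∧ a - x = t • d.vec

/-- The bend distance from a point `p` inside a face `f` to a port candidate `(a, d)`:
the minimum number of bends of an orthogonal polyline inside `f` from `p` to `a` arriving
at `a` from direction `d`.  (A polyline on `m` points has `m - 2` bends; collinear
consecutive segments can always be merged, so the minimum is unaffected.) -/
noncomputable def bdist (f : Set Pt) (p a : Pt) (d : Dir) : ℕ :=
  sInf {b | ∃ l, PolyFrom f p a l ∧ ArrivesFrom d l ∧ l.length - 2 = b}

/-- `F` is a histogram over the horizontal baseline `δ` from `(x₁, y₀)` to `(x₂, y₀)`: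
the baseline is a segment on (the boundary of) `F`, and every point of `F` is reachable by a
vertical ray starting at the baseline and orthogonal to it. -/
def IsHistogram (F : Set Pt) (y₀ x₁ x₂ : ℝ) : Prop :=
  segment ℝ ((x₁, y₀) : Pt) ((x₂, y₀) : Pt) ⊆ F ∧
  ∀ p ∈ F, ((p.1, y₀) : Pt) ∈ segment ℝ ((x₁, y₀) : Pt) ((x₂, y₀) : Pt) ∧
    segment ℝ ((p.1, y₀) : Pt) p ⊆ F

/-!
Prepending a polyline with `b` bends from `p` to `q` to an optimal polyline from `q` to `(a, d)`
gives `bdist p ≤ bdist q + b + 1`. Two points of a histogram are joined inside it by a polyline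
with two bends: down to the baseline, along it, and up again.
-/

section

variable {f : Set Pt} {p q r a : Pt} {d : Dir} {k l m : List Pt}

theorem AxisParallel.symm (h : AxisParallel p q) : AxisParallel q p :=
  h.imp Eq.symm Eq.symm

namespace PolyFrom

theorem length_ge_two (hm : PolyFrom f p q m) : 2 ≤ m.length := hm.1.1

theorem mono {g : Set Pt} (hfg : f ⊆ g) (hm : PolyFrom f p q m) : PolyFrom g p q m :=
  ⟨⟨hm.1.1, hm.1.2.imp fun _ _ h => ⟨h.1, h.2.trans hfg⟩⟩, hm.2⟩

theorem reverse (hm : PolyFrom f p q m) : PolyFrom f q p m.reverse := by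
  obtain ⟨⟨hlen, hchain⟩, hhead, hlast⟩ := hm
  refine ⟨⟨by simpa using hlen, List.isChain_reverse.2 ?_⟩, by simpa using hlast, by simpa using hhead⟩
  exact hchain.imp fun _ _ h => ⟨h.1.symm, (segment_symm ℝ _ _).subset.trans h.2⟩

theorem append (hm : PolyFrom f p q (k ++ [q])) (hl : PolyFrom f q r l) :
    PolyFrom f p r (k ++ l) := by
  obtain ⟨⟨hklen, hkchain⟩, hkhead, -⟩ := hm
  obtain ⟨⟨hlen, hchain⟩, hhead, hlast⟩ := hl
  have hk : k ≠ [] := by rintro rfl; simp at hklen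
  have hl : l ≠ [] := by rintro rfl; simp at hlen
  obtain ⟨hkchain, -, hjoin⟩ := List.isChain_append.1 hkchain
  refine ⟨⟨by simp only [List.length_append] at hklen ⊢; omega, hkchain.append hchain ?_⟩, ?_, ?_⟩
  · simpa [hhead] using hjoin
  · rwa [List.head?_append_of_ne_nil _ hk] at hkhead ⊢
  · rwa [List.getLast?_append_of_ne_nil _ hl]

end PolyFrom

theorem ArrivesFrom.append_left (k : List Pt) (hl : ArrivesFrom d l) : ArrivesFrom d (k ++ l) :=
  let ⟨x, y, hsuf, hdir⟩ := hl
  ⟨x, y, hsuf.trans (List.suffix_append k l), hdir⟩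

/-- Concatenation at `q` costs one extra bend, whether or not the two polylines actually turn there. -/
theorem PolyFrom.exists_bends_add (hm : PolyFrom f p q m) (hl : PolyFrom f q a l)
    (hd : ArrivesFrom d l) :
    ∃ l', PolyFrom f p a l' ∧ ArrivesFrom d l' ∧
      l'.length - 2 = (m.length - 2) + (l.length - 2) + 1 := by
  obtain ⟨k, rfl⟩ : ∃ k, m = k ++ [q] := ⟨_, (List.dropLast_append_getLast? q hm.2.2).symm⟩
  have hk := hm.length_ge_two
  have hl2 := hl.length_ge_two
  refine ⟨k ++ l, hm.append hl, hd.append_left k, ?_⟩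
  simp only [List.length_append, List.length_singleton] at hk ⊢
  omega

theorem bdist_le (hl : PolyFrom f p a l) (hd : ArrivesFrom d l) : bdist f p a d ≤ l.length - 2 :=
  Nat.sInf_le ⟨l, hl, hd, rfl⟩

theorem exists_polyFrom_bdist (h : ∃ l, PolyFrom f p a l ∧ ArrivesFrom d l) :
    ∃ l, PolyFrom f p a l ∧ ArrivesFrom d l ∧ l.length - 2 = bdist f p a d :=
  let ⟨l, hl, hd⟩ := h
  Nat.sInf_mem (s := {b | ∃ l, PolyFrom f p a l ∧ ArrivesFrom d l ∧ l.length - 2 = b})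
    ⟨_, l, hl, hd, rfl⟩

theorem bdist_eq_zero_of_not_exists (h : ¬∃ l, PolyFrom f p a l ∧ ArrivesFrom d l) :
    bdist f p a d = 0 :=
  Nat.sInf_eq_zero.2 <| .inr <| Set.eq_empty_of_forall_notMem fun _ ⟨l, hl, hd, _⟩ =>
    h ⟨l, hl, hd⟩

theorem bdist_le_bdist_add (hm : PolyFrom f p q m) :
    bdist f p a d ≤ bdist f q a d + (m.length - 2) + 1 := by
  by_cases hq : ∃ l, PolyFrom f q a l ∧ ArrivesFrom d l
  · obtain ⟨l, hl, hd, hlen⟩ := exists_polyFrom_bdist hq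
    obtain ⟨l', hl', hd', hlen'⟩ := hm.exists_bends_add hl hd
    have := bdist_le hl' hd'
    omega
  · -- `sInf ∅ = 0`: going back along `m` shows that `a` is unreachable from `p` as well.
    have hp : bdist f p a d = 0 := bdist_eq_zero_of_not_exists fun ⟨l, hl, hd⟩ =>
      let ⟨l', hl', hd', _⟩ := hm.reverse.exists_bends_add hl hd
      hq ⟨l', hl', hd'⟩
    omega

theorem IsHistogram.polyFrom {F : Set Pt} {y₀ x₁ x₂ : ℝ} (hF : IsHistogram F y₀ x₁ x₂)
    (hp : p ∈ F) (hq : q ∈ F) : PolyFrom F p q [p, (p.1, y₀), (q.1, y₀), q] := by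
  obtain ⟨hpδ, hpF⟩ := hF.2 p hp
  obtain ⟨hqδ, hqF⟩ := hF.2 q hq
  have hbase : segment ℝ ((p.1, y₀) : Pt) (q.1, y₀) ⊆ F :=
    ((convex_segment _ _).segment_subset hpδ hqδ).trans hF.1
  refine ⟨⟨by simp, ?_⟩, rfl, rfl⟩
  exact .cons_cons ⟨Or.inl rfl, (segment_symm ℝ _ _).subset.trans hpF⟩
    (.cons_cons ⟨Or.inr rfl, hbase⟩ (.cons_cons ⟨Or.inl rfl, hqF⟩ (.singleton _)))

theorem IsHistogram.bdist_le_bdist_add_three {F : Set Pt} {y₀ x₁ x₂ : ℝ}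
    (hF : IsHistogram F y₀ x₁ x₂) (hFf : F ⊆ f) (hp : p ∈ F) (hq : q ∈ F) :
    bdist f p a d ≤ bdist f q a d + 3 :=
  bdist_le_bdist_add ((hF.polyFrom hp hq).mono hFf)

end

/-- Let `F` be a sector with a baseline (a histogram) contained in the face `f`, and let
`(a, d)` be a port candidate.  Then for any two points `p, q ∈ F`,
`|bdist(p,(a,d)) - bdist(q,(a,d))| ≤ 3`. -/
theorem stmt_3 (f F : Set Pt) (hFf : F ⊆ f) (y₀ x₁ x₂ : ℝ)
    (hhist : IsHistogram F y₀ x₁ x₂) (a : Pt) (d : Dir)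
    (p q : Pt) (hp : p ∈ F) (hq : q ∈ F) :
    |(bdist f p a d : ℤ) - (bdist f q a d : ℤ)| ≤ 3 := by
  have hpq := hhist.bdist_le_bdist_add_three (a := a) (d := d) hFf hp hq
  have hqp := hhist.bdist_le_bdist_add_three (a := a) (d := d) hFf hq hp
  rw [abs_sub_le_iff]
  omega
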